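/- Let κ : ℝ → ℝ be continuous, bounded, and disconjugate (every Jacobi solution for κ that vanishes at two distinct points is identically zero). Let T ≠ 0 and let z_T be the unique Jacobi solution for κ with z_T(0) = 1 and z_T(T) = 0. Then z_T is unbounded on ℝ. -/

import Mathlib

/-!
If `|z| ≤ C`, disconjugacy makes `T` the only zero of `z`, and uniqueness for the Jacobi
equation makes `z² + z'²` positive everywhere. This gives an explicit second solution `y` with
Wronskian `z y' - z' y = 1`, so `(y / z)' = 1 / z² ≥ 1 / C²` away from `T`: the quotient `y / z`
tends to `+∞` at `+∞` and to `-∞` at `-∞`. For `s ∉ [0, T]` the solution `y - (y s / z s) z`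
vanishes at `s` and takes the value `y T ≠ 0` at `T`; by disconjugacy it has no zero on `[0, T]`,
so `y 0 - y s / z s` has the sign of `y T` for all such `s`, which one of the two limits violates.
-/

open Set

/-- A Jacobi solution for `κ` on `ℝ`: a `C²` function with `z'' + κ z = 0`. -/
def IsJacobi (κ z : ℝ → ℝ) : Prop :=
  ContDiff ℝ 2 z ∧ ∀ t, deriv (deriv z) t + κ t * z t = 0

/-- `κ` is disconjugate: every Jacobi solution for `κ` that vanishes at two
distinct points is identically zero. -/
def Disconjugate (κ : ℝ → ℝ) : Prop :=
  ∀ z : ℝ → ℝ, IsJacobi κ z →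
    ∀ a b : ℝ, a ≠ b → z a = 0 → z b = 0 → ∀ t, z t = 0

open Filter

theorem eq_zero_of_abs_deriv_le_mul_abs_of_le {f f' K : ℝ → ℝ} {t₀ t : ℝ} (hK : Continuous K)
    (hf : ∀ t, HasDerivAt f (f' t) t) (hbound : ∀ t, |f' t| ≤ K t * |f t|) (h₀ : f t₀ = 0)
    (ht : t₀ ≤ t) : f t = 0 := by
  obtain ⟨B, hB⟩ := isCompact_Icc.exists_bound_of_continuousOn (hK.continuousOn (s := Icc t₀ t))
  refine eq_zero_of_abs_deriv_le_mul_abs_self_of_eq_zero_right (K := B)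
    (fun x _ => (hf x).continuousAt.continuousWithinAt) (fun x _ => (hf x).hasDerivWithinAt) h₀
    (fun x hx => ?_) t ⟨ht, le_rfl⟩
  calc |f' x| ≤ K x * |f x| := hbound x
    _ ≤ B * |f x| := by
      gcongr
      exact (le_abs_self _).trans (hB x (Ico_subset_Icc_self hx))

theorem eq_zero_of_abs_deriv_le_mul_abs {f f' K : ℝ → ℝ} {t₀ : ℝ} (hK : Continuous K)
    (hf : ∀ t, HasDerivAt f (f' t) t) (hbound : ∀ t, |f' t| ≤ K t * |f t|) (h₀ : f t₀ = 0)
    (t : ℝ) : f t = 0 := by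
  rcases le_total t₀ t with ht | ht
  · exact eq_zero_of_abs_deriv_le_mul_abs_of_le hK hf hbound h₀ ht
  · have hf_neg : ∀ s, HasDerivAt (fun s => f (-s)) (-f' (-s)) s := fun s => by
      have := (hf (-s)).comp s (hasDerivAt_neg s)
      rwa [mul_neg_one] at this
    simpa using eq_zero_of_abs_deriv_le_mul_abs_of_le (hK.comp continuous_neg) hf_neg
      (fun s => by simpa using hbound (-s)) (by simpa using h₀) (neg_le_neg ht)

theorem tendsto_atTop_of_le_deriv {q q' : ℝ → ℝ} {a m : ℝ} (hm : 0 < m)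
    (hq : ∀ t, a < t → HasDerivAt q (q' t) t) (hq' : ∀ t, a < t → m ≤ q' t) :
    Tendsto q atTop atTop := by
  have hlin : ∀ s, a + 1 ≤ s → m * (s - (a + 1)) + q (a + 1) ≤ q s := fun s hs => by
    have := (convex_Ioi a).mul_sub_le_image_sub_of_le_deriv
      (fun t ht => (hq t ht).continuousAt.continuousWithinAt)
      (fun t ht => (hq t (by simpa using ht)).differentiableAt.differentiableWithinAt)
      (fun t ht => (hq t (by simpa using ht)).deriv ▸ hq' t (by simpa using ht))
      (a + 1) (by simp) s (by simp; linarith) hs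
    linarith
  refine tendsto_atTop_mono' _ ((eventually_ge_atTop (a + 1)).mono hlin) ?_
  refine tendsto_atTop_add_const_right _ _ (Tendsto.const_mul_atTop hm ?_)
  simpa [sub_eq_add_neg] using tendsto_atTop_add_const_right _ (-(a + 1)) tendsto_id

theorem tendsto_atBot_of_le_deriv {q q' : ℝ → ℝ} {a m : ℝ} (hm : 0 < m)
    (hq : ∀ t, t < a → HasDerivAt q (q' t) t) (hq' : ∀ t, t < a → m ≤ q' t) :
    Tendsto q atBot atBot := by
  have hlin : ∀ s, s ≤ a - 1 → q s ≤ m * (s - (a - 1)) + q (a - 1) := fun s hs => by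
    have := (convex_Iio a).mul_sub_le_image_sub_of_le_deriv
      (fun t ht => (hq t ht).continuousAt.continuousWithinAt)
      (fun t ht => (hq t (by simpa using ht)).differentiableAt.differentiableWithinAt)
      (fun t ht => (hq t (by simpa using ht)).deriv ▸ hq' t (by simpa using ht))
      s (by simp; linarith) (a - 1) (by simp) hs
    linarith
  refine tendsto_atBot_mono' _ ((eventually_le_atBot (a - 1)).mono hlin) ?_
  refine tendsto_atBot_add_const_right _ _ (Tendsto.const_mul_atBot hm ?_)
  simpa [sub_eq_add_neg] using tendsto_atBot_add_const_right _ (-(a - 1)) tendsto_id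

noncomputable def wronskian (z y : ℝ → ℝ) (t : ℝ) : ℝ :=
  z t * deriv y t - deriv z t * y t

theorem hasDerivAt_div_eq_wronskian_div_sq {y z : ℝ → ℝ} {t : ℝ} (hy : DifferentiableAt ℝ y t)
    (hz : DifferentiableAt ℝ z t) (ht : z t ≠ 0) :
    HasDerivAt (fun t => y t / z t) (wronskian z y t / z t ^ 2) t :=
  (hy.hasDerivAt.div hz.hasDerivAt ht).congr_deriv (by rw [wronskian]; ring)

theorem isJacobi_of_hasDerivAt {κ z z' : ℝ → ℝ} (hκ : Continuous κ)
    (hz : ∀ t, HasDerivAt z (z' t) t) (hz' : ∀ t, HasDerivAt z' (-(κ t * z t)) t) :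
    IsJacobi κ z := by
  have hd : deriv z = z' := funext fun t => (hz t).deriv
  have hd' : deriv z' = fun t => -(κ t * z t) := funext fun t => (hz' t).deriv
  have hzc : Continuous z := continuous_iff_continuousAt.2 fun t => (hz t).continuousAt
  refine ⟨?_, fun t => by rw [hd, hd']; ring⟩
  rw [show (2 : WithTop ℕ∞) = 1 + 1 by norm_num, contDiff_succ_iff_deriv, hd,
    contDiff_one_iff_deriv, hd']
  exact ⟨fun t => (hz t).differentiableAt, by simp, fun t => (hz' t).differentiableAt,
    (hκ.mul hzc).neg⟩

namespace IsJacobi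

variable {κ y z : ℝ → ℝ}

theorem hasDerivAt (hz : IsJacobi κ z) (t : ℝ) : HasDerivAt z (deriv z t) t :=
  (hz.1.differentiable (by norm_num) t).hasDerivAt

theorem hasDerivAt_deriv (hz : IsJacobi κ z) (t : ℝ) :
    HasDerivAt (deriv z) (-(κ t * z t)) t := by
  rw [← eq_neg_of_add_eq_zero_left (hz.2 t)]
  exact (hz.1.differentiable_deriv_two t).hasDerivAt

theorem hasDerivAt_sq_add_sq_deriv (hz : IsJacobi κ z) (t : ℝ) :
    HasDerivAt (fun t => z t ^ 2 + deriv z t ^ 2) (2 * z t * deriv z t * (1 - κ t)) t := by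
  refine (((hz.hasDerivAt t).fun_pow 2).fun_add
    ((hz.hasDerivAt_deriv t).fun_pow 2)).congr_deriv ?_
  push_cast
  ring

theorem eq_zero_of_sq_add_sq_deriv_eq_zero (hκ : Continuous κ) (hz : IsJacobi κ z) {t₀ : ℝ}
    (h₀ : z t₀ ^ 2 + deriv z t₀ ^ 2 = 0) (t : ℝ) : z t = 0 := by
  have hbound : ∀ t, |2 * z t * deriv z t * (1 - κ t)| ≤
      |1 - κ t| * |z t ^ 2 + deriv z t ^ 2| := fun t => by
    rw [abs_mul, mul_comm, abs_of_nonneg (by positivity : 0 ≤ z t ^ 2 + deriv z t ^ 2)]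
    gcongr
    rw [abs_le]
    constructor <;> nlinarith [sq_nonneg (z t + deriv z t), sq_nonneg (z t - deriv z t)]
  have hE := eq_zero_of_abs_deriv_le_mul_abs (by fun_prop) hz.hasDerivAt_sq_add_sq_deriv
    hbound h₀ t
  nlinarith [sq_nonneg (z t), sq_nonneg (deriv z t)]

theorem sub_const_mul (hy : IsJacobi κ y) (hz : IsJacobi κ z) (c : ℝ) :
    IsJacobi κ (fun t => y t - c * z t) := by
  have hderiv : deriv (fun t => y t - c * z t) = fun t => deriv y t - c * deriv z t :=
    funext fun t => ((hy.hasDerivAt t).fun_sub ((hz.hasDerivAt t).const_mul c)).deriv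
  refine ⟨hy.1.sub (contDiff_const.mul hz.1), fun t => ?_⟩
  rw [hderiv, ((hy.hasDerivAt_deriv t).fun_sub ((hz.hasDerivAt_deriv t).const_mul c)).deriv]
  ring

/- The second solution is `y = α z - z' / (z² + z'²)`: writing
`(y, y') = α (z, z') + (-z', z) / (z² + z'²)` makes the Wronskian identically `1`, and the
Jacobi equation for `y` then reduces to `α' = (1 - κ) (z² - z'²) / (z² + z'²)²`. Unlike
reduction of order, this has no singularity at the zeros of `z`. -/
theorem exists_wronskian_eq_one (hκ : Continuous κ) (hz : IsJacobi κ z)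
    (hE : ∀ t, z t ^ 2 + deriv z t ^ 2 ≠ 0) :
    ∃ y, IsJacobi κ y ∧ ∀ t, wronskian z y t = 1 := by
  set E := fun t => z t ^ 2 + deriv z t ^ 2
  set g := fun t => (1 - κ t) * (z t ^ 2 - deriv z t ^ 2) / E t ^ 2
  have hzc : Continuous z := hz.1.continuous
  have hz'c : Continuous (deriv z) := hz.1.continuous_deriv (by norm_num)
  have hgc : Continuous g :=
    Continuous.div (by fun_prop) (by fun_prop) fun t => pow_ne_zero 2 (hE t)
  have hα : ∀ t, HasDerivAt (fun t => ∫ s in (0 : ℝ)..t, g s) (g t) t := fun t =>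
    (hgc.integral_hasStrictDerivAt 0 t).hasDerivAt
  set α := fun t => ∫ s in (0 : ℝ)..t, g s
  have hy : ∀ t, HasDerivAt (fun t => α t * z t - deriv z t / E t)
      (α t * deriv z t + z t / E t) t := fun t => by
    refine (((hα t).mul (hz.hasDerivAt t)).fun_sub
      ((hz.hasDerivAt_deriv t).div (hz.hasDerivAt_sq_add_sq_deriv t) (hE t))).congr_deriv ?_
    have := hE t
    simp only [g, E]
    field_simp
    ring
  have hy' : ∀ t, HasDerivAt (fun t => α t * deriv z t + z t / E t)
      (-(κ t * (α t * z t - deriv z t / E t))) t := fun t => by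
    refine (((hα t).mul (hz.hasDerivAt_deriv t)).fun_add
      ((hz.hasDerivAt t).div (hz.hasDerivAt_sq_add_sq_deriv t) (hE t))).congr_deriv ?_
    have := hE t
    simp only [g, E]
    field_simp
    ring
  refine ⟨_, isJacobi_of_hasDerivAt hκ hy hy', fun t => ?_⟩
  rw [wronskian, (hy t).deriv]
  have := hE t
  simp only [E]
  field_simp
  ring

end IsJacobi

theorem Disconjugate.mul_pos_of_eq_zero_of_notMem_uIcc {κ w : ℝ → ℝ} (hdis : Disconjugate κ)
    (hw : IsJacobi κ w) {a b s : ℝ} (hs : w s = 0) (hsab : s ∉ uIcc a b) (hb : w b ≠ 0) :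
    0 < w a * w b := by
  by_contra! hab
  have h0 : (0 : ℝ) ∈ uIcc (w a) (w b) := by
    rcases mul_nonpos_iff.1 hab with h | h
    exacts [mem_uIcc.2 (Or.inr ⟨h.2, h.1⟩), mem_uIcc.2 (Or.inl h)]
  obtain ⟨r, hr, hwr⟩ := intermediate_value_uIcc hw.1.continuous.continuousOn h0
  exact hb (hdis w hw r s (fun h => hsab (h ▸ hr)) hwr hs b)

theorem jacobi_solution_unbounded_general (κ : ℝ → ℝ) (hκ : Continuous κ)
    (hdis : Disconjugate κ)
    (T : ℝ) (z : ℝ → ℝ) (hz : IsJacobi κ z)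
    (hz0 : z 0 = 1) (hzT : z T = 0) :
    ¬ ∃ C : ℝ, ∀ t, |z t| ≤ C := by
  rintro ⟨C, hC⟩
  have hzne : ∀ t, t ≠ T → z t ≠ 0 := fun t ht h => by
    simpa [hz0] using hdis z hz t T ht h hzT 0
  obtain ⟨y, hy, hW⟩ := hz.exists_wronskian_eq_one hκ fun t h => by
    simpa [hz0] using hz.eq_zero_of_sq_add_sq_deriv_eq_zero hκ h 0
  have hyT : y T ≠ 0 := fun h => by simpa [wronskian, hzT, h] using hW T
  have hsign : ∀ s ∉ uIcc 0 T, 0 < (y 0 - y s / z s) * y T := fun s hs => by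
    have hsT : s ≠ T := fun h => hs (h ▸ right_mem_uIcc)
    simpa [hz0, hzT] using hdis.mul_pos_of_eq_zero_of_notMem_uIcc
      (hy.sub_const_mul hz (y s / z s)) (by field_simp [hzne s hsT]; ring) hs
      (by simpa [hzT] using hyT)
  have hq : ∀ t, t ≠ T → HasDerivAt (fun t => y t / z t) (1 / z t ^ 2) t := fun t ht => by
    simpa [hW t] using hasDerivAt_div_eq_wronskian_div_sq (hy.hasDerivAt t).differentiableAt
      (hz.hasDerivAt t).differentiableAt (hzne t ht)
  have hC2 : 0 < 1 / C ^ 2 := by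
    have := hC 0
    rw [hz0, abs_one] at this
    positivity
  have hqm : ∀ t, t ≠ T → 1 / C ^ 2 ≤ 1 / z t ^ 2 := fun t ht => by
    have := hzne t ht
    exact one_div_le_one_div_of_le (by positivity) (sq_le_sq.2 ((hC t).trans (le_abs_self C)))
  rcases hyT.lt_or_gt with hneg | hpos
  · obtain ⟨s, hqs, hs⟩ := (((tendsto_atBot_of_le_deriv hC2 (fun t ht => hq t ht.ne)
      (fun t ht => hqm t ht.ne)).eventually_le_atBot (y 0)).and
      (eventually_lt_atBot (min 0 T))).exists
    nlinarith [hsign s (notMem_uIcc_of_lt (hs.trans_le (min_le_left _ _))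
      (hs.trans_le (min_le_right _ _)))]
  · obtain ⟨s, hqs, hs⟩ := (((tendsto_atTop_of_le_deriv hC2 (fun t ht => hq t ht.ne')
      (fun t ht => hqm t ht.ne')).eventually_ge_atTop (y 0)).and
      (eventually_gt_atTop (max 0 T))).exists
    nlinarith [hsign s (notMem_uIcc_of_gt ((le_max_left _ _).trans_lt hs)
      ((le_max_right _ _).trans_lt hs))]

/-- If `κ` is continuous, bounded and disconjugate, `T ≠ 0`, and `z` is the
(unique) Jacobi solution with `z(0) = 1` and `z(T) = 0`, then `z` is unbounded. -/
theorem jacobi_solution_unbounded (κ : ℝ → ℝ) (hκ : Continuous κ)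
    (hbd : ∃ C : ℝ, ∀ t, |κ t| ≤ C) (hdis : Disconjugate κ)
    (T : ℝ) (hT : T ≠ 0) (z : ℝ → ℝ) (hz : IsJacobi κ z)
    (hz0 : z 0 = 1) (hzT : z T = 0) :
    ¬ ∃ C : ℝ, ∀ t, |z t| ≤ C :=
  jacobi_solution_unbounded_general κ hκ hdis T z hz hz0 hzT
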